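/- arXiv:1306.0626 — 6 statements merged into one kernel-verified Lean document; each statement's English description precedes it below -/
import Mathlib

section
/- Let d₁, d₂, m be positive integers, let u, u* ∈ ℝ^{d₁} be unit vectors, and let x₁,…,x_m ∈ ℝ^{d₁}, y₁,…,y_m ∈ ℝ^{d₂}. Define B = (1/m) Σᵢ (xᵢᵀu)² yᵢyᵢᵀ and B* = (1/m) Σᵢ (xᵢᵀu)(xᵢᵀu*) yᵢyᵢᵀ. Let δ > 0 and assume that for every pair of unit vectors w, w⊥ ∈ ℝ^{d₁} with wᵀw⊥ = 0 one has ‖(1/m) Σᵢ (xᵢᵀw)(xᵢᵀw⊥) yᵢyᵢᵀ‖₂ ≤ δ. Then ‖(u*ᵀu) B − B*‖₂ ≤ δ √(1 − (uᵀu*)²). -/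
open Matrix
open scoped Matrix.Norms.L2Operator

/-- Bound on the spectral norm of `(u*ᵀu)·B − B*` in the rank-one
alternating-minimization analysis. -/
theorem perturbation_operator_bound
    (d₁ d₂ m : ℕ) (hd₁ : 0 < d₁) (hd₂ : 0 < d₂) (hm : 0 < m)
    (u ustar : Fin d₁ → ℝ) (hu : u ⬝ᵥ u = 1) (hustar : ustar ⬝ᵥ ustar = 1)
    (x : Fin m → Fin d₁ → ℝ) (y : Fin m → Fin d₂ → ℝ)
    (B Bstar : Matrix (Fin d₂) (Fin d₂) ℝ)
    (hB : B = (m : ℝ)⁻¹ • ∑ i, ((x i ⬝ᵥ u) ^ 2) • vecMulVec (y i) (y i))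
    (hBstar : Bstar = (m : ℝ)⁻¹ • ∑ i, ((x i ⬝ᵥ u) * (x i ⬝ᵥ ustar)) • vecMulVec (y i) (y i))
    (δ : ℝ) (hδ : 0 < δ)
    (hconc : ∀ w wperp : Fin d₁ → ℝ, w ⬝ᵥ w = 1 → wperp ⬝ᵥ wperp = 1 → w ⬝ᵥ wperp = 0 →
      ‖(m : ℝ)⁻¹ • ∑ i, ((x i ⬝ᵥ w) * (x i ⬝ᵥ wperp)) • vecMulVec (y i) (y i)‖ ≤ δ) :
    ‖(ustar ⬝ᵥ u) • B - Bstar‖ ≤ δ * Real.sqrt (1 - (u ⬝ᵥ ustar) ^ 2) := by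
  subst hB hBstar
  set c : ℝ := u ⬝ᵥ ustar with hc
  have hcc : ustar ⬝ᵥ u = c := dotProduct_comm _ _
  set v : Fin d₁ → ℝ := c • u - ustar with hv
  have hvv : v ⬝ᵥ v = 1 - c ^ 2 := by
    simp only [hv, sub_dotProduct, dotProduct_sub, smul_dotProduct, dotProduct_smul,
      smul_eq_mul, hu, hustar, dotProduct_comm ustar u, ← hc]
    ring
  have huv : u ⬝ᵥ v = 0 := by
    simp only [hv, dotProduct_sub, dotProduct_smul, smul_eq_mul, hu, ← hc]
    ring
  have hxv : ∀ i, x i ⬝ᵥ v = c * (x i ⬝ᵥ u) - x i ⬝ᵥ ustar := by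
    intro i
    simp [hv, dotProduct_sub, dotProduct_smul]
  have key : (ustar ⬝ᵥ u) • ((m : ℝ)⁻¹ • ∑ i, ((x i ⬝ᵥ u) ^ 2) • vecMulVec (y i) (y i))
      - (m : ℝ)⁻¹ • ∑ i, ((x i ⬝ᵥ u) * (x i ⬝ᵥ ustar)) • vecMulVec (y i) (y i)
      = (m : ℝ)⁻¹ • ∑ i, ((x i ⬝ᵥ u) * (x i ⬝ᵥ v)) • vecMulVec (y i) (y i) := by
    rw [hcc, smul_comm, ← smul_sub, Finset.smul_sum, ← Finset.sum_sub_distrib]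
    congr 1
    refine Finset.sum_congr rfl fun i _ => ?_
    rw [smul_smul, ← sub_smul]
    congr 1
    rw [hxv i]; ring
  rw [key]
  have h1c : 0 ≤ 1 - c ^ 2 := by
    rw [← hvv]
    simp only [dotProduct]
    exact Finset.sum_nonneg fun i _ => mul_self_nonneg (v i)
  rcases eq_or_lt_of_le h1c with h0 | hpos
  · -- v = 0
    have hv0 : v = 0 := by
      have : v ⬝ᵥ v = 0 := by rw [hvv, ← h0]
      exact dotProduct_self_eq_zero.mp this
    have : ∀ i, x i ⬝ᵥ v = 0 := fun i => by rw [hv0]; simp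
    simp only [this, mul_zero, zero_smul, Finset.sum_const_zero, smul_zero, norm_zero]
    positivity
  · set s : ℝ := Real.sqrt (1 - c ^ 2) with hs
    have hspos : 0 < s := Real.sqrt_pos.mpr hpos
    have hs2 : s ^ 2 = 1 - c ^ 2 := Real.sq_sqrt h1c
    set wperp : Fin d₁ → ℝ := s⁻¹ • v with hw
    have hwperp : wperp ⬝ᵥ wperp = 1 := by
      simp only [hw, smul_dotProduct, dotProduct_smul, smul_eq_mul, hvv]
      field_simp
      rw [← hs2]
    have huw : u ⬝ᵥ wperp = 0 := by
      simp [hw, dotProduct_smul, huv]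
    have hxw : ∀ i, x i ⬝ᵥ v = s * (x i ⬝ᵥ wperp) := by
      intro i
      simp only [hw, dotProduct_smul, smul_eq_mul]
      field_simp
    have hsum : ∑ i, ((x i ⬝ᵥ u) * (x i ⬝ᵥ v)) • vecMulVec (y i) (y i)
        = s • ∑ i, ((x i ⬝ᵥ u) * (x i ⬝ᵥ wperp)) • vecMulVec (y i) (y i) := by
      rw [Finset.smul_sum]
      refine Finset.sum_congr rfl fun i _ => ?_
      rw [hxw i, smul_smul]
      congr 1
      ring
    have hrw : (m : ℝ)⁻¹ • ∑ i, ((x i ⬝ᵥ u) * (x i ⬝ᵥ v)) • vecMulVec (y i) (y i)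
        = s • ((m : ℝ)⁻¹ • ∑ i, ((x i ⬝ᵥ u) * (x i ⬝ᵥ wperp)) • vecMulVec (y i) (y i)) := by
      rw [hsum, smul_comm]
    rw [hrw, norm_smul, Real.norm_eq_abs, abs_of_pos hspos, mul_comm δ s]
    exact mul_le_mul_of_nonneg_left (hconc u wperp hu hwperp huw) hspos.le
end

section
/- Let σ* > 0, let u, u* ∈ ℝ^{d₁} and v* ∈ ℝ^{d₂} be unit vectors with uᵀu* ≥ 9/10, and let G ∈ ℝ^{d₂} satisfy ‖G‖₂ ≤ (1/99)√(1 − (uᵀu*)²). Set v̂ = σ*(uᵀu*) v* − σ* G. Then v̂ ≠ 0, and the normalized vector v = v̂/‖v̂‖₂ satisfies 1 − (vᵀv*)² ≤ (1/2)(1 − (uᵀu*)²) and vᵀv* ≥ 9/10. -/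
open Matrix

lemma dot_sq_le (d : ℕ) (f g : Fin d → ℝ) : (f ⬝ᵥ g)^2 ≤ (f ⬝ᵥ f) * (g ⬝ᵥ g) := by
  have := Finset.sum_mul_sq_le_sq_mul_sq Finset.univ f g
  simpa [dotProduct, pow_two] using this

lemma aux_sqrt_lb (t : ℝ) (ht : 0 < t) (h2 : (181 : ℝ) / 200 ≤ t ^ 2) :
    (9 : ℝ) / 10 ≤ t := by nlinarith

lemma dot_self_nonneg (d : ℕ) (f : Fin d → ℝ) : 0 ≤ f ⬝ᵥ f := by
  apply Finset.sum_nonneg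
  intro i _
  exact mul_self_nonneg _

/-- One-step contraction guarantee for rank-one alternating minimization. -/
theorem one_step_contraction
    (d₁ d₂ : ℕ) (σs : ℝ) (hσs : 0 < σs)
    (u ustar : Fin d₁ → ℝ) (vstar : Fin d₂ → ℝ)
    (hu : u ⬝ᵥ u = 1) (hustar : ustar ⬝ᵥ ustar = 1) (hvstar : vstar ⬝ᵥ vstar = 1)
    (halign : (9 : ℝ) / 10 ≤ u ⬝ᵥ ustar)
    (G : Fin d₂ → ℝ)
    (hG : Real.sqrt (G ⬝ᵥ G) ≤ (1 / 99) * Real.sqrt (1 - (u ⬝ᵥ ustar) ^ 2))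
    (vhat : Fin d₂ → ℝ)
    (hvhat : vhat = (σs * (u ⬝ᵥ ustar)) • vstar - σs • G) :
    vhat ≠ 0 ∧
    (1 - (((Real.sqrt (vhat ⬝ᵥ vhat))⁻¹ • vhat) ⬝ᵥ vstar) ^ 2
        ≤ (1 / 2) * (1 - (u ⬝ᵥ ustar) ^ 2)) ∧
    ((9 : ℝ) / 10 ≤ ((Real.sqrt (vhat ⬝ᵥ vhat))⁻¹ • vhat) ⬝ᵥ vstar) := by
  set c : ℝ := u ⬝ᵥ ustar with hc
  set g : ℝ := G ⬝ᵥ vstar with hg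
  set n : ℝ := G ⬝ᵥ G with hn
  -- basic bounds
  have hc2 : c ^ 2 ≤ 1 := by
    have := dot_sq_le d₁ u ustar
    rw [hu, hustar] at this; simpa using this
  have hc1 : c ≤ 1 := by nlinarith
  have hn0 : 0 ≤ n := dot_self_nonneg d₂ G
  have hg2 : g ^ 2 ≤ n := by
    have := dot_sq_le d₂ G vstar
    rw [hvstar] at this; simpa [hn] using this
  -- square the noise bound
  have hnb : 9801 * n ≤ 1 - c ^ 2 := by
    have h1 : (0 : ℝ) ≤ Real.sqrt (G ⬝ᵥ G) := Real.sqrt_nonneg _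
    have h2 : Real.sqrt (G ⬝ᵥ G) ^ 2 ≤ ((1 / 99) * Real.sqrt (1 - c ^ 2)) ^ 2 := by
      apply pow_le_pow_left₀ h1 hG
    rw [Real.sq_sqrt hn0] at h2
    rw [mul_pow, Real.sq_sqrt (by nlinarith : (0:ℝ) ≤ 1 - c ^ 2)] at h2
    nlinarith
  have hgle : g ≤ 1 / 99 := by nlinarith [sq_nonneg (g - 1 / 99)]
  have hcg : (881 : ℝ) / 990 ≤ c - g := by linarith
  -- the key quadratic quantity
  set D : ℝ := c ^ 2 - 2 * c * g + n with hD
  have hDlb : ((881 : ℝ) / 990) ^ 2 ≤ D := by nlinarith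
  have hDpos : 0 < D := by nlinarith
  -- dot product computations
  have hvv : vhat ⬝ᵥ vhat = σs ^ 2 * D := by
    subst hvhat
    simp only [sub_dotProduct, dotProduct_sub, smul_dotProduct, dotProduct_smul,
      smul_eq_mul, hvstar, dotProduct_comm vstar G, ← hc, ← hg, ← hn, hD]
    ring
  have hvs : vhat ⬝ᵥ vstar = σs * (c - g) := by
    subst hvhat
    simp only [sub_dotProduct, smul_dotProduct, smul_eq_mul, hvstar, ← hc, ← hg]
    ring
  have hvvpos : 0 < vhat ⬝ᵥ vhat := by rw [hvv]; positivity
  have hvne : vhat ≠ 0 := by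
    intro h
    rw [h] at hvvpos
    simp [dotProduct] at hvvpos
  set s : ℝ := Real.sqrt (vhat ⬝ᵥ vhat) with hs
  have hspos : 0 < s := Real.sqrt_pos.mpr hvvpos
  have hs2 : s ^ 2 = σs ^ 2 * D := by rw [hs, Real.sq_sqrt hvvpos.le, hvv]
  have hdot : (s⁻¹ • vhat) ⬝ᵥ vstar = s⁻¹ * (σs * (c - g)) := by
    rw [smul_dotProduct, hvs]; rfl
  clear_value c g n D s
  -- contraction bound
  have key : 1 - (s⁻¹ * (σs * (c - g))) ^ 2 ≤ (1 / 2) * (1 - c ^ 2) := by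
    have hexp : (s⁻¹ * (σs * (c - g))) ^ 2 = (c - g) ^ 2 / D := by
      rw [mul_pow, mul_pow, inv_pow, hs2]
      field_simp
    rw [hexp]
    have hmain : 2 * (n - g ^ 2) ≤ (1 - c ^ 2) * D := by
      have h1 : (1 - c ^ 2) * ((881 : ℝ) / 990) ^ 2 ≤ (1 - c ^ 2) * D :=
        mul_le_mul_of_nonneg_left hDlb (by linarith)
      linarith [h1, hnb, hc2, sq_nonneg g]
    have h2 : 1 - (c - g) ^ 2 / D = (n - g ^ 2) / D := by
      field_simp
      rw [hD]; ring
    rw [h2, div_le_iff₀ hDpos]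
    linarith
  have halignv : (9 : ℝ) / 10 ≤ s⁻¹ * (σs * (c - g)) := by
    set t : ℝ := s⁻¹ * (σs * (c - g)) with ht
    have htpos : 0 < t := by
      apply mul_pos (inv_pos.mpr hspos)
      apply mul_pos hσs
      linarith
    clear_value t
    have h1 : 1 - t ^ 2 ≤ (1 / 2) * (1 - c ^ 2) := key
    have hc81 : (81 : ℝ) / 100 ≤ c ^ 2 := by nlinarith [halign]
    have h2 : (181 : ℝ) / 200 ≤ t ^ 2 := by linarith
    exact aux_sqrt_lb t htpos h2
  exact ⟨hvne, by rwa [hdot], by rwa [hdot]⟩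
end

section
/- Let σ* > 0, let u* ∈ ℝ^{d₁} and v* ∈ ℝ^{d₂} be unit vectors, and set W* = σ* u* v*ᵀ. Let S ∈ ℝ^{d₁×d₂} satisfy ‖S − W*‖₂ ≤ σ*/100, and let u₀ ∈ ℝ^{d₁}, v₀ ∈ ℝ^{d₂} be unit vectors forming a top singular vector pair of S, i.e. u₀ᵀ S v₀ = ‖S‖₂. Then ‖S‖₂ ≥ (99/100) σ*, (u₀ᵀu*)(v₀ᵀv*) ≥ 98/100, and in particular |u₀ᵀu*| ≥ 9/10 and |v₀ᵀv*| ≥ 9/10. -/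
open Matrix
open scoped Matrix.Norms.L2Operator

section Aux

variable {d d₁ d₂ : ℕ}

private lemma dot_eq_inner (u v : Fin d → ℝ) :
    u ⬝ᵥ v = inner ℝ ((EuclideanSpace.equiv (Fin d) ℝ).symm u)
      ((EuclideanSpace.equiv (Fin d) ℝ).symm v) := by
  simp [PiLp.inner_apply, dotProduct, RCLike.inner_apply, mul_comm]

private lemma norm_eq_one_of_dot (u : Fin d → ℝ) (hu : u ⬝ᵥ u = 1) :
    ‖(EuclideanSpace.equiv (Fin d) ℝ).symm u‖ = 1 := by
  have h := real_inner_self_eq_norm_mul_norm ((EuclideanSpace.equiv (Fin d) ℝ).symm u)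
  rw [← dot_eq_inner, hu] at h
  nlinarith [norm_nonneg ((EuclideanSpace.equiv (Fin d) ℝ).symm u)]

private lemma abs_dot_le_one (u v : Fin d → ℝ) (hu : u ⬝ᵥ u = 1) (hv : v ⬝ᵥ v = 1) :
    |u ⬝ᵥ v| ≤ 1 := by
  rw [dot_eq_inner]
  calc _ ≤ ‖(EuclideanSpace.equiv (Fin d) ℝ).symm u‖ *
      ‖(EuclideanSpace.equiv (Fin d) ℝ).symm v‖ := abs_real_inner_le_norm _ _
    _ = 1 := by rw [norm_eq_one_of_dot u hu, norm_eq_one_of_dot v hv, mul_one]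

private lemma abs_bilin_le (A : Matrix (Fin d₁) (Fin d₂) ℝ) (u : Fin d₁ → ℝ)
    (v : Fin d₂ → ℝ) (hu : u ⬝ᵥ u = 1) (hv : v ⬝ᵥ v = 1) :
    |u ⬝ᵥ A *ᵥ v| ≤ ‖A‖ := by
  have key := A.l2_opNorm_mulVec ((EuclideanSpace.equiv (Fin d₂) ℝ).symm v)
  have hAv : (A *ᵥ ((EuclideanSpace.equiv (Fin d₂) ℝ).symm v) : Fin d₁ → ℝ) = A *ᵥ v := rfl
  rw [hAv, norm_eq_one_of_dot v hv, mul_one] at key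
  have h1 : u ⬝ᵥ A *ᵥ v = inner ℝ ((EuclideanSpace.equiv (Fin d₁) ℝ).symm u)
      ((EuclideanSpace.equiv (Fin d₁) ℝ).symm (A *ᵥ v)) := dot_eq_inner _ _
  rw [h1]
  calc _ ≤ ‖(EuclideanSpace.equiv (Fin d₁) ℝ).symm u‖ *
      ‖(EuclideanSpace.equiv (Fin d₁) ℝ).symm (A *ᵥ v)‖ := abs_real_inner_le_norm _ _
    _ ≤ ‖A‖ := by rw [norm_eq_one_of_dot u hu, one_mul]; exact key

end Aux

/-- Initialization guarantee: the top singular vectors of a matrix `S`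
close in spectral norm to the rank-one matrix `W* = σ* u* v*ᵀ` are well aligned
with `u*` and `v*`. -/
theorem initialization_alignment
    (d₁ d₂ : ℕ) (σs : ℝ) (hσs : 0 < σs)
    (ustar : Fin d₁ → ℝ) (vstar : Fin d₂ → ℝ)
    (hustar : ustar ⬝ᵥ ustar = 1) (hvstar : vstar ⬝ᵥ vstar = 1)
    (Wstar : Matrix (Fin d₁) (Fin d₂) ℝ)
    (hW : Wstar = σs • vecMulVec ustar vstar)
    (S : Matrix (Fin d₁) (Fin d₂) ℝ)
    (hS : ‖S - Wstar‖ ≤ σs / 100)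
    (u₀ : Fin d₁ → ℝ) (v₀ : Fin d₂ → ℝ)
    (hu₀ : u₀ ⬝ᵥ u₀ = 1) (hv₀ : v₀ ⬝ᵥ v₀ = 1)
    (htop : u₀ ⬝ᵥ S.mulVec v₀ = ‖S‖) :
    (99 / 100) * σs ≤ ‖S‖ ∧
    (98 : ℝ) / 100 ≤ (u₀ ⬝ᵥ ustar) * (v₀ ⬝ᵥ vstar) ∧
    (9 : ℝ) / 10 ≤ |u₀ ⬝ᵥ ustar| ∧ (9 : ℝ) / 10 ≤ |v₀ ⬝ᵥ vstar| := by
  -- bilinear form of Wstar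
  have hWbilin : ∀ (u : Fin d₁ → ℝ) (v : Fin d₂ → ℝ),
      u ⬝ᵥ Wstar *ᵥ v = σs * ((u ⬝ᵥ ustar) * (v ⬝ᵥ vstar)) := by
    intro u v
    subst hW
    simp [vecMulVec_eq, mulVec_smul, ← mulVec_mulVec, dotProduct_smul,
      dotProduct, Finset.mul_sum, Finset.sum_mul, mulVec, Matrix.replicateCol, Matrix.replicateRow]
    rw [Finset.sum_comm]
    congr 1; ext j; congr 1; ext i; simp [vecMulVec_apply]; ring
  -- error bounds
  have hE1 : |ustar ⬝ᵥ (S - Wstar) *ᵥ vstar| ≤ σs / 100 :=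
    le_trans (abs_bilin_le _ _ _ hustar hvstar) hS
  have hE2 : |u₀ ⬝ᵥ (S - Wstar) *ᵥ v₀| ≤ σs / 100 :=
    le_trans (abs_bilin_le _ _ _ hu₀ hv₀) hS
  have hsplit : ∀ (u : Fin d₁ → ℝ) (v : Fin d₂ → ℝ),
      u ⬝ᵥ S *ᵥ v = σs * ((u ⬝ᵥ ustar) * (v ⬝ᵥ vstar)) + u ⬝ᵥ (S - Wstar) *ᵥ v := by
    intro u v
    rw [← hWbilin u v, sub_mulVec, dotProduct_sub]
    ring
  -- lower bound on ‖S‖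
  have hstarS : ustar ⬝ᵥ S *ᵥ vstar ≤ ‖S‖ :=
    le_trans (le_abs_self _) (abs_bilin_le _ _ _ hustar hvstar)
  have h1 : (99 / 100) * σs ≤ ‖S‖ := by
    have := hsplit ustar vstar
    rw [hustar, hvstar] at this
    have := abs_le.mp hE1
    nlinarith
  refine ⟨h1, ?_, ?_, ?_⟩
  · have := hsplit u₀ v₀
    rw [htop] at this
    have := abs_le.mp hE2
    nlinarith
  all_goals {
    have hP : (98 : ℝ) / 100 ≤ (u₀ ⬝ᵥ ustar) * (v₀ ⬝ᵥ vstar) := by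
      have := hsplit u₀ v₀
      rw [htop] at this
      have := abs_le.mp hE2
      nlinarith
    have hu1 : |u₀ ⬝ᵥ ustar| ≤ 1 := abs_dot_le_one _ _ hu₀ hustar
    have hv1 : |v₀ ⬝ᵥ vstar| ≤ 1 := abs_dot_le_one _ _ hv₀ hvstar
    have habs : (98 : ℝ) / 100 ≤ |u₀ ⬝ᵥ ustar| * |v₀ ⬝ᵥ vstar| := by
      rw [← abs_mul]; exact le_trans hP (le_abs_self _)
    nlinarith [abs_nonneg (u₀ ⬝ᵥ ustar), abs_nonneg (v₀ ⬝ᵥ vstar)]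
  }
end

section
/- Let X ∈ ℝ^{d₁×n₁} and Y ∈ ℝ^{d₂×n₂} satisfy XXᵀ = I_{d₁} and YYᵀ = I_{d₂}, with columns x₁,…,x_{n₁} of X satisfying ‖xᵢ‖₂² ≤ μ²d₁/n₁ for all i, and columns y₁,…,y_{n₂} of Y satisfying ‖yⱼ‖₂² ≤ μ²d₂/n₂ for all j. Let W ∈ ℝ^{d₁×d₂} with ‖W‖₂ ≤ σ₁. Then ‖ (1/(n₁n₂)) Σ_{i=1}^{n₁} Σ_{j=1}^{n₂} ‖yⱼ‖₂² · xᵢxᵢᵀ W yⱼyⱼᵀ Wᵀ xᵢxᵢᵀ ‖₂ ≤ σ₁² μ⁴ d₁ d₂ / (n₁² n₂²). -/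
open Matrix
open scoped Matrix.Norms.L2Operator

lemma vecMulVec_mul_mat {m n p : Type*} [Fintype n] (u : m → ℝ) (v : n → ℝ) (M : Matrix n p ℝ) :
    vecMulVec u v * M = vecMulVec u (v ᵥ* M) := by
  ext a b
  simp [mul_apply, vecMulVec_apply, vecMul, dotProduct, Finset.mul_sum, mul_assoc]

lemma vecMulVec_mul_vecMulVec {m n p : Type*} [Fintype n] (u : m → ℝ) (v w : n → ℝ) (z : p → ℝ) :
    vecMulVec u v * vecMulVec w z = (v ⬝ᵥ w) • vecMulVec u z := by
  ext a b
  simp only [mul_apply, vecMulVec_apply, dotProduct, Matrix.smul_apply, smul_eq_mul, Finset.sum_mul]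
  exact Finset.sum_congr rfl fun k _ => by ring

lemma key_term {d₁ d₂ : ℕ} (x : Fin d₁ → ℝ) (y : Fin d₂ → ℝ) (W : Matrix (Fin d₁) (Fin d₂) ℝ) :
    vecMulVec x x * W * vecMulVec y y * Wᵀ * vecMulVec x x
      = ((x ᵥ* W ⬝ᵥ y) ^ 2) • vecMulVec x x := by
  rw [vecMulVec_mul_mat, _root_.vecMulVec_mul_vecMulVec]
  simp only [Matrix.smul_mul]
  rw [vecMulVec_mul_mat, _root_.vecMulVec_mul_vecMulVec, smul_smul]
  congr 1
  have : (y ᵥ* Wᵀ) ⬝ᵥ x = x ᵥ* W ⬝ᵥ y := by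
    rw [vecMul_transpose, dotProduct_comm, dotProduct_mulVec]
  rw [this]; ring

lemma diag_norm_le {n : ℕ} (b : Fin n → ℝ) (K : ℝ) (hK : 0 ≤ K) (h : ∀ i, |b i| ≤ K) :
    ‖(diagonal b : Matrix (Fin n) (Fin n) ℝ)‖ ≤ K := by
  rw [l2_opNorm_def]
  refine ContinuousLinearMap.opNorm_le_bound _ hK fun v => ?_
  show ‖toEuclideanLin (diagonal b) v‖ ≤ K * ‖v‖
  rw [EuclideanSpace.norm_eq, EuclideanSpace.norm_eq]
  have h1 : ∀ i, ‖(toEuclideanLin (diagonal b) v) i‖ ^ 2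
      ≤ K ^ 2 * ‖v i‖ ^ 2 := by
    intro i
    have heq : (toEuclideanLin (diagonal b) v) i = b i * v i := by
      simp [toEuclideanLin_apply, mulVec_diagonal]
    rw [heq]
    simp only [norm_mul, Real.norm_eq_abs, mul_pow]
    have := h i
    have h2 : |b i| ^ 2 ≤ K ^ 2 := by nlinarith [abs_nonneg (b i)]
    nlinarith [sq_nonneg (|v i|), sq_nonneg (b i)]
  calc Real.sqrt (∑ i, ‖(toEuclideanLin (diagonal b) v) i‖ ^ 2)
      ≤ Real.sqrt (∑ i, K ^ 2 * ‖v i‖ ^ 2) := by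
        apply Real.sqrt_le_sqrt; exact Finset.sum_le_sum fun i _ => h1 i
    _ = K * Real.sqrt (∑ i, ‖v i‖ ^ 2) := by
        rw [← Finset.mul_sum, Real.sqrt_mul (by positivity), Real.sqrt_sq hK]

lemma sum_smul_vecMulVec {d n : ℕ} (X : Matrix (Fin d) (Fin n) ℝ) (b : Fin n → ℝ) :
    ∑ i, b i • vecMulVec (fun a => X a i) (fun a => X a i) = X * diagonal b * Xᵀ := by
  ext a c
  simp only [Finset.sum_apply, Matrix.sum_apply, Matrix.smul_apply, vecMulVec_apply, smul_eq_mul,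
    mul_apply, diagonal_apply, transpose_apply, mul_ite, ite_mul, mul_zero, zero_mul,
    Finset.sum_ite_eq, Finset.sum_ite_eq', Finset.mem_univ, if_true]
  exact Finset.sum_congr rfl fun k _ => by ring

lemma norm_transpose_le_one {d n : ℕ} (X : Matrix (Fin d) (Fin n) ℝ) (hX : X * Xᵀ = 1) :
    ‖Xᵀ‖ ≤ 1 ∧ ‖X‖ ≤ 1 := by
  have hct : (Xᵀ)ᴴ = X := by ext a c; simp [conjTranspose_apply]
  have hone : ‖(1 : Matrix (Fin d) (Fin d) ℝ)‖ ≤ 1 := by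
    rw [cstar_norm_def, _root_.map_one]
    exact ContinuousLinearMap.norm_id_le
  have h1 : ‖Xᵀ‖ * ‖Xᵀ‖ ≤ 1 := by
    rw [← l2_opNorm_conjTranspose_mul_self Xᵀ, hct, hX]; exact hone
  have h2 : ‖Xᵀ‖ ≤ 1 := by nlinarith [norm_nonneg Xᵀ]
  refine ⟨h2, ?_⟩
  calc ‖X‖ = ‖(Xᵀ)ᴴ‖ := by rw [hct]
    _ = ‖Xᵀ‖ := l2_opNorm_conjTranspose Xᵀ
    _ ≤ 1 := h2

lemma euclid_norm_sq {k : ℕ} (v : Fin k → ℝ) :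
    ‖(WithLp.equiv 2 (Fin k → ℝ)).symm v‖ ^ 2 = v ⬝ᵥ v := by
  rw [EuclideanSpace.norm_eq, Real.sq_sqrt (by positivity)]
  simp only [WithLp.equiv_symm_apply, PiLp.toLp_apply, Real.norm_eq_abs, sq_abs, dotProduct]
  exact Finset.sum_congr rfl fun i _ => by ring

lemma dot_self_vecMul_le {d₁ d₂ : ℕ} (W : Matrix (Fin d₁) (Fin d₂) ℝ) (x : Fin d₁ → ℝ) :
    (x ᵥ* W) ⬝ᵥ (x ᵥ* W) ≤ ‖W‖ ^ 2 * (x ⬝ᵥ x) := by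
  have hWt : ‖Wᵀ‖ = ‖W‖ := by
    have : Wᴴ = Wᵀ := by ext a b; simp [conjTranspose_apply]
    rw [← this]; exact l2_opNorm_conjTranspose W
  have hmv := Matrix.l2_opNorm_mulVec Wᵀ ((WithLp.equiv 2 (Fin d₁ → ℝ)).symm x)
  have hx : Wᵀ *ᵥ ((WithLp.equiv 2 (Fin d₁ → ℝ)).symm x) = x ᵥ* W := by
    rw [mulVec_transpose]; rfl
  rw [hx] at hmv
  have h1 : ‖(EuclideanSpace.equiv (Fin d₂) ℝ).symm (x ᵥ* W)‖ ^ 2 = (x ᵥ* W) ⬝ᵥ (x ᵥ* W) :=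
    euclid_norm_sq _
  have h2 : ‖(WithLp.equiv 2 (Fin d₁ → ℝ)).symm x‖ ^ 2 = x ⬝ᵥ x := euclid_norm_sq _
  calc (x ᵥ* W) ⬝ᵥ (x ᵥ* W) = ‖(EuclideanSpace.equiv (Fin d₂) ℝ).symm (x ᵥ* W)‖ ^ 2 := h1.symm
    _ ≤ (‖Wᵀ‖ * ‖(WithLp.equiv 2 (Fin d₁ → ℝ)).symm x‖) ^ 2 := by
        have := norm_nonneg ((EuclideanSpace.equiv (Fin d₂) ℝ).symm (x ᵥ* W))
        nlinarith
    _ = ‖W‖ ^ 2 * (x ⬝ᵥ x) := by rw [mul_pow, hWt, h2]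

lemma sum_sq_dot {d₂ n₂ : ℕ} (Y : Matrix (Fin d₂) (Fin n₂) ℝ) (hY : Y * Yᵀ = 1)
    (u : Fin d₂ → ℝ) :
    ∑ j, (u ⬝ᵥ (fun a => Y a j)) ^ 2 = u ⬝ᵥ u := by
  have h1 : ∀ j, u ⬝ᵥ (fun a => Y a j) = (u ᵥ* Y) j := by
    intro j; simp [vecMul, dotProduct]
  calc ∑ j, (u ⬝ᵥ (fun a => Y a j)) ^ 2 = ∑ j, ((u ᵥ* Y) j) ^ 2 :=
        Finset.sum_congr rfl fun j _ => by rw [h1]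
    _ = (u ᵥ* Y) ⬝ᵥ (u ᵥ* Y) := by
        rw [dotProduct]; exact Finset.sum_congr rfl fun j _ => pow_two _
    _ = (u ᵥ* Y) ⬝ᵥ (Yᵀ *ᵥ u) := by rw [mulVec_transpose]
    _ = ((u ᵥ* Y) ᵥ* Yᵀ) ⬝ᵥ u := by rw [dotProduct_mulVec]
    _ = (u ᵥ* (Y * Yᵀ)) ⬝ᵥ u := by rw [vecMul_vecMul]
    _ = u ⬝ᵥ u := by rw [hY, vecMul_one]

/-- Variance bound `‖E[Z_{ij}Z_{ij}ᵀ]‖₂ ≤ σ₁²μ⁴d₁d₂/(n₁²n₂²)` for the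
inductive matrix completion measurement operator. -/
theorem inductive_mc_variance_bound
    (d₁ d₂ n₁ n₂ : ℕ) (mu σ₁ : ℝ)
    (X : Matrix (Fin d₁) (Fin n₁) ℝ) (Y : Matrix (Fin d₂) (Fin n₂) ℝ)
    (hX : X * Xᵀ = 1) (hY : Y * Yᵀ = 1)
    (hXinc : ∀ i, (fun a => X a i) ⬝ᵥ (fun a => X a i) ≤ mu ^ 2 * d₁ / n₁)
    (hYinc : ∀ j, (fun a => Y a j) ⬝ᵥ (fun a => Y a j) ≤ mu ^ 2 * d₂ / n₂)
    (W : Matrix (Fin d₁) (Fin d₂) ℝ) (hW : ‖W‖ ≤ σ₁) :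
    ‖((n₁ : ℝ) * n₂)⁻¹ • ∑ i, ∑ j,
        ((fun a => Y a j) ⬝ᵥ (fun a => Y a j)) •
          (vecMulVec (fun a => X a i) (fun a => X a i) * W *
            vecMulVec (fun a => Y a j) (fun a => Y a j) * Wᵀ *
            vecMulVec (fun a => X a i) (fun a => X a i))‖
      ≤ σ₁ ^ 2 * mu ^ 4 * d₁ * d₂ / ((n₁ : ℝ) ^ 2 * (n₂ : ℝ) ^ 2) := by
  have hσ : 0 ≤ σ₁ := le_trans (norm_nonneg W) hW
  have hd2 : (0:ℝ) ≤ mu ^ 2 * d₂ / n₂ := by positivity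
  set K : ℝ := mu ^ 2 * d₂ / n₂ * (σ₁ ^ 2 * (mu ^ 2 * d₁ / n₁)) with hKdef
  have hK0 : 0 ≤ K := by positivity
  set b : Fin n₁ → ℝ := fun i => ∑ j, ((fun a => Y a j) ⬝ᵥ (fun a => Y a j)) *
      (((fun a => X a i) ᵥ* W) ⬝ᵥ (fun a => Y a j)) ^ 2 with hbdef
  have hsum : (∑ i, ∑ j,
        ((fun a => Y a j) ⬝ᵥ (fun a => Y a j)) •
          (vecMulVec (fun a => X a i) (fun a => X a i) * W *
            vecMulVec (fun a => Y a j) (fun a => Y a j) * Wᵀ *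
            vecMulVec (fun a => X a i) (fun a => X a i)))
      = X * diagonal b * Xᵀ := by
    rw [← sum_smul_vecMulVec X b]
    refine Finset.sum_congr rfl fun i _ => ?_
    rw [hbdef]
    rw [Finset.sum_smul]
    refine Finset.sum_congr rfl fun j _ => ?_
    rw [key_term, smul_smul]
  rw [hsum]
  have hbb : ∀ i, |b i| ≤ K := by
    intro i
    have hy0 : ∀ j, (0:ℝ) ≤ (fun a => Y a j) ⬝ᵥ (fun a => Y a j) := fun j =>
      Finset.sum_nonneg fun a _ => mul_self_nonneg _
    have hb0 : 0 ≤ b i := Finset.sum_nonneg fun j _ =>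
      mul_nonneg (hy0 j) (sq_nonneg _)
    rw [abs_of_nonneg hb0]
    have hx0 : (0:ℝ) ≤ (fun a => X a i) ⬝ᵥ (fun a => X a i) :=
      Finset.sum_nonneg fun a _ => mul_self_nonneg _
    calc b i ≤ ∑ j, (mu ^ 2 * d₂ / n₂) *
          (((fun a => X a i) ᵥ* W) ⬝ᵥ (fun a => Y a j)) ^ 2 :=
        Finset.sum_le_sum fun j _ =>
          mul_le_mul_of_nonneg_right (hYinc j) (sq_nonneg _)
      _ = (mu ^ 2 * d₂ / n₂) *
          ∑ j, (((fun a => X a i) ᵥ* W) ⬝ᵥ (fun a => Y a j)) ^ 2 := by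
          rw [Finset.mul_sum]
      _ = (mu ^ 2 * d₂ / n₂) *
          (((fun a => X a i) ᵥ* W) ⬝ᵥ ((fun a => X a i) ᵥ* W)) := by
          rw [sum_sq_dot Y hY]
      _ ≤ (mu ^ 2 * d₂ / n₂) * (‖W‖ ^ 2 * ((fun a => X a i) ⬝ᵥ (fun a => X a i))) :=
          mul_le_mul_of_nonneg_left (dot_self_vecMul_le W _) hd2
      _ ≤ K := by
          rw [hKdef]
          have hW2 : ‖W‖ ^ 2 ≤ σ₁ ^ 2 := by nlinarith [norm_nonneg W]
          have := hXinc i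
          have hn : ‖W‖ ^ 2 ≥ 0 := sq_nonneg _
          apply mul_le_mul_of_nonneg_left _ hd2
          nlinarith
  have hD : ‖diagonal b‖ ≤ K := diag_norm_le b K hK0 hbb
  obtain ⟨hXt1, hX1⟩ := norm_transpose_le_one X hX
  have hM : ‖X * diagonal b * Xᵀ‖ ≤ K := by
    have e1 : ‖X * diagonal b * Xᵀ‖ ≤ ‖X * diagonal b‖ * ‖Xᵀ‖ := l2_opNorm_mul _ _
    have e2 : ‖X * diagonal b‖ ≤ ‖X‖ * ‖diagonal b‖ := l2_opNorm_mul _ _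
    have n1 := norm_nonneg (X * diagonal b)
    have n2 := norm_nonneg Xᵀ
    have n3 := norm_nonneg X
    have n4 := norm_nonneg (diagonal b)
    nlinarith
  rw [norm_smul]
  have hr : ‖((n₁ : ℝ) * n₂)⁻¹‖ = ((n₁ : ℝ) * n₂)⁻¹ := by
    rw [Real.norm_eq_abs, abs_of_nonneg (by positivity)]
  rw [hr]
  have hfin : ((n₁ : ℝ) * n₂)⁻¹ * K
      ≤ σ₁ ^ 2 * mu ^ 4 * d₁ * d₂ / ((n₁ : ℝ) ^ 2 * (n₂ : ℝ) ^ 2) := by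
    rcases Nat.eq_zero_or_pos n₁ with h1 | h1
    · have : K = 0 := by rw [hKdef]; subst h1; simp
      rw [this, mul_zero]; positivity
    rcases Nat.eq_zero_or_pos n₂ with h2 | h2
    · have : K = 0 := by rw [hKdef]; subst h2; simp
      rw [this, mul_zero]; positivity
    have hn1 : (0:ℝ) < n₁ := by exact_mod_cast h1
    have hn2 : (0:ℝ) < n₂ := by exact_mod_cast h2
    apply le_of_eq
    rw [hKdef]
    field_simp
  calc ((n₁ : ℝ) * n₂)⁻¹ * ‖X * diagonal b * Xᵀ‖
      ≤ ((n₁ : ℝ) * n₂)⁻¹ * K := by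
        apply mul_le_mul_of_nonneg_left hM (by positivity)
    _ ≤ _ := hfin
end

section
/- Let x₁,…,x_m ∈ ℝ^{d₁}, y₁,…,y_m ∈ ℝ^{d₂}, and let U ∈ ℝ^{d₁×k} and U* ∈ ℝ^{d₁×k} have orthonormal columns u₁,…,u_k and u_{*1},…,u_{*k} respectively. Define block matrices B, C, D ∈ ℝ^{kd₂×kd₂} with (p,q)-th d₂×d₂ blocks B_{pq} = (1/m) Σᵢ (xᵢᵀu_p)(xᵢᵀu_q) yᵢyᵢᵀ, C_{pq} = (1/m) Σᵢ (xᵢᵀu_p)(xᵢᵀu_{*q}) yᵢyᵢᵀ, and D_{pq} = (u_pᵀu_{*q}) I_{d₂}. Let δ > 0 and suppose that for every pair of unit vectors w, w⊥ ∈ ℝ^{d₁} with wᵀw⊥ = 0 one has ‖(1/m) Σᵢ (xᵢᵀw)(xᵢᵀw⊥) yᵢyᵢᵀ‖₂ ≤ δ. Then ‖BD − C‖₂ ≤ k δ · dist(U, U*). -/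
open Matrix
open scoped Matrix.Norms.L2Operator

lemma aux_l2_opNorm_le {m n : Type*} [Fintype m] [Fintype n] [DecidableEq n]
    (A : Matrix m n ℝ) {c : ℝ} (hc : 0 ≤ c)
    (h : ∀ w : EuclideanSpace ℝ n,
      ‖((WithLp.equiv 2 (m → ℝ)).symm (A *ᵥ (WithLp.equiv 2 (n → ℝ)) w) : EuclideanSpace ℝ m)‖
        ≤ c * ‖w‖) :
    ‖A‖ ≤ c := by
  rw [Matrix.l2_opNorm_def]
  refine ContinuousLinearMap.opNorm_le_bound _ hc fun w => ?_
  simpa [Matrix.toEuclideanLin_apply] using h w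

lemma aux_col_le {m n : Type*} [Fintype m] [Fintype n] [DecidableEq n]
    (A : Matrix m n ℝ) (q : n) :
    Real.sqrt (∑ a, (A a q)^2) ≤ ‖A‖ := by
  have h := A.l2_opNorm_mulVec (EuclideanSpace.single q (1:ℝ))
  rw [EuclideanSpace.norm_single, norm_one, mul_one] at h
  refine le_trans (le_of_eq ?_) h
  rw [EuclideanSpace.norm_eq]
  congr 1
  refine Finset.sum_congr rfl fun a _ => ?_
  have h2 : (A *ᵥ (EuclideanSpace.single q (1:ℝ) : EuclideanSpace ℝ n)) a = A a q := by
    simp [Matrix.mulVec, dotProduct, EuclideanSpace.single_apply]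
  have h3 : ((EuclideanSpace.equiv m ℝ).symm (A *ᵥ (EuclideanSpace.single q (1:ℝ)))) a
      = (A *ᵥ (EuclideanSpace.single q (1:ℝ) : EuclideanSpace ℝ n)) a := rfl
  rw [h3, h2, Real.norm_eq_abs, sq_abs]

/-- Spectral-norm bound `‖BD − C‖₂ ≤ kδ·dist(U, U*)` for the block
matrices arising in the rank-k alternating-minimization analysis, where
`dist(U, U*) = ‖(I − UUᵀ)U*‖₂`. -/
theorem block_BD_minus_C_bound
    (d₁ d₂ k m : ℕ)
    (x : Fin m → Fin d₁ → ℝ) (y : Fin m → Fin d₂ → ℝ)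
    (U Ustar : Matrix (Fin d₁) (Fin k) ℝ)
    (hU : Uᵀ * U = 1) (hUstar : Ustarᵀ * Ustar = 1)
    (B C D : Matrix (Fin k × Fin d₂) (Fin k × Fin d₂) ℝ)
    (hB : B = Matrix.of fun pi qj =>
      (m : ℝ)⁻¹ * ∑ t, ((x t ⬝ᵥ fun a => U a pi.1) * (x t ⬝ᵥ fun a => U a qj.1))
        * (y t pi.2 * y t qj.2))
    (hC : C = Matrix.of fun pi qj =>
      (m : ℝ)⁻¹ * ∑ t, ((x t ⬝ᵥ fun a => U a pi.1) * (x t ⬝ᵥ fun a => Ustar a qj.1))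
        * (y t pi.2 * y t qj.2))
    (hD : D = Matrix.of fun pi qj =>
      ((fun a => U a pi.1) ⬝ᵥ fun a => Ustar a qj.1) * (if pi.2 = qj.2 then 1 else 0))
    (δ : ℝ) (hδ : 0 < δ)
    (hconc : ∀ w wperp : Fin d₁ → ℝ, w ⬝ᵥ w = 1 → wperp ⬝ᵥ wperp = 1 → w ⬝ᵥ wperp = 0 →
      ‖(m : ℝ)⁻¹ • ∑ t, ((x t ⬝ᵥ w) * (x t ⬝ᵥ wperp)) • vecMulVec (y t) (y t)‖ ≤ δ) :
    ‖B * D - C‖ ≤ (k : ℝ) * δ * ‖(1 - U * Uᵀ) * Ustar‖ := by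
  classical
  set c := ‖(1 - U * Uᵀ) * Ustar‖ with hc
  have hc0 : (0:ℝ) ≤ c := norm_nonneg _
  set V : Matrix (Fin d₁) (Fin k) ℝ := (U * Uᵀ - 1) * Ustar with hV
  have hVnorm : ‖V‖ = c := by
    have hneg : V = -((1 - U * Uᵀ) * Ustar) := by
      rw [hV, ← Matrix.neg_mul, neg_sub]
    rw [hneg, norm_neg]
  have hUV : Uᵀ * V = 0 := by
    rw [hV, ← Matrix.mul_assoc, Matrix.mul_sub, Matrix.mul_one, ← Matrix.mul_assoc, hU,
      Matrix.one_mul, sub_self, Matrix.zero_mul]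
  set N : Fin k → Fin k → Matrix (Fin d₂) (Fin d₂) ℝ := fun p q =>
    (m:ℝ)⁻¹ • ∑ t, ((x t ⬝ᵥ fun a => U a p) * (x t ⬝ᵥ fun a => V a q)) • vecMulVec (y t) (y t)
    with hNdef
  have hNapp : ∀ p q i j, N p q i j
      = (m:ℝ)⁻¹ * ∑ t, ((x t ⬝ᵥ fun a => U a p) * (x t ⬝ᵥ fun a => V a q)) * (y t i * y t j) := by
    intro p q i j
    rw [hNdef]
    simp [Matrix.sum_apply, Matrix.vecMulVec_apply, mul_assoc]
  have hent : ∀ p q i j, (B * D - C) (p, i) (q, j) = N p q i j := by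
    intro p q i j
    rw [hNapp]
    have hVdecomp : V = U * (Uᵀ * Ustar) - Ustar := by
      rw [hV, Matrix.sub_mul, Matrix.one_mul, Matrix.mul_assoc]
    have hxV : ∀ t, (x t ⬝ᵥ fun a => V a q)
        = (∑ r, (x t ⬝ᵥ fun a => U a r) * ((fun a => U a r) ⬝ᵥ fun a => Ustar a q))
          - (x t ⬝ᵥ fun a => Ustar a q) := by
      intro t
      have h1 : (x t ⬝ᵥ fun a => V a q) = (x t ᵥ* V) q := rfl
      rw [h1, hVdecomp, Matrix.vecMul_sub, ← Matrix.vecMul_vecMul]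
      simp only [Pi.sub_apply, Matrix.vecMul, Matrix.mul_apply, dotProduct,
        Matrix.transpose_apply]
    subst hB hC hD
    simp only [hxV]
    simp only [Matrix.sub_apply, Matrix.mul_apply, Matrix.of_apply, Fintype.sum_prod_type]
    simp only [mul_ite, mul_one, mul_zero, Finset.sum_ite_eq', Finset.mem_univ, if_true]
    simp only [mul_sub, sub_mul, Finset.sum_sub_distrib, Finset.mul_sum, Finset.sum_mul]
    congr 1
    rw [Finset.sum_comm]
    refine Finset.sum_congr rfl fun r _ => ?_
    refine Finset.sum_congr rfl fun t _ => ?_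
    ring
  have hNnorm : ∀ p q, ‖N p q‖ ≤ δ * c := by
    intro p q
    by_cases hvz : ∀ a, V a q = 0
    · have hNz : N p q = 0 := by
        rw [hNdef]
        have hz : ∀ t, (x t ⬝ᵥ fun a => V a q) = 0 := by
          intro t; simp [dotProduct, hvz]
        simp [hz]
      rw [hNz, norm_zero]
      positivity
    · push_neg at hvz
      obtain ⟨a₀, ha₀⟩ := hvz
      have hsum_pos : 0 < ∑ a, (V a q)^2 :=
        Finset.sum_pos' (fun a _ => sq_nonneg _) ⟨a₀, Finset.mem_univ _, by positivity⟩
      set s := Real.sqrt (∑ a, (V a q)^2) with hs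
      have hs_pos : 0 < s := Real.sqrt_pos.mpr hsum_pos
      have hs_sq : s^2 = ∑ a, (V a q)^2 := Real.sq_sqrt hsum_pos.le
      set wp : Fin d₁ → ℝ := fun a => s⁻¹ * V a q with hwp
      have h1 : (fun a => U a p) ⬝ᵥ (fun a => U a p) = 1 := by
        have h := congrFun (congrFun hU p) p
        simpa [Matrix.mul_apply, Matrix.one_apply, dotProduct, Matrix.transpose_apply] using h
      have h2 : wp ⬝ᵥ wp = 1 := by
        simp only [hwp, dotProduct]
        have he : ∑ a, (s⁻¹ * V a q) * (s⁻¹ * V a q) = s⁻¹^2 * ∑ a, (V a q)^2 := by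
          rw [Finset.mul_sum]; exact Finset.sum_congr rfl fun a _ => by ring
        rw [he, ← hs_sq]
        field_simp
      have h0 : (fun a => U a p) ⬝ᵥ (fun a => V a q) = 0 := by
        have h := congrFun (congrFun hUV p) q
        simpa [Matrix.mul_apply, dotProduct, Matrix.transpose_apply] using h
      have h3 : (fun a => U a p) ⬝ᵥ wp = 0 := by
        simp only [hwp, dotProduct] at h0 ⊢
        have he : ∑ a, U a p * (s⁻¹ * V a q) = s⁻¹ * ∑ a, U a p * V a q := by
          rw [Finset.mul_sum]; exact Finset.sum_congr rfl fun a _ => by ring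
        rw [he, h0, mul_zero]
      have hb := hconc (fun a => U a p) wp h1 h2 h3
      have hxs : ∀ t, (x t ⬝ᵥ fun a => V a q) = s * (x t ⬝ᵥ wp) := by
        intro t
        simp only [hwp, dotProduct]
        rw [Finset.mul_sum]
        refine Finset.sum_congr rfl fun a _ => ?_
        field_simp
      have hNs : N p q = s • ((m:ℝ)⁻¹ •
          ∑ t, ((x t ⬝ᵥ fun a => U a p) * (x t ⬝ᵥ wp)) • vecMulVec (y t) (y t)) := by
        simp only [hNdef]
        rw [smul_smul, mul_comm s ((m:ℝ)⁻¹), ← smul_smul]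
        congr 1
        rw [Finset.smul_sum]
        refine Finset.sum_congr rfl fun t _ => ?_
        rw [smul_smul]
        congr 1
        rw [hxs t]; ring
      rw [hNs, norm_smul, Real.norm_eq_abs, abs_of_pos hs_pos]
      have hsc : s ≤ c := hVnorm ▸ aux_col_le V q
      refine (mul_le_mul_of_nonneg_left hb hs_pos.le).trans ?_
      calc s * δ ≤ c * δ := mul_le_mul_of_nonneg_right hsc hδ.le
        _ = δ * c := mul_comm _ _
  -- final step
  have hk0 : (0:ℝ) ≤ (k:ℝ) * δ * c := by positivity
  refine aux_l2_opNorm_le _ hk0 ?_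
  intro w
  set W : Fin k → EuclideanSpace ℝ (Fin d₂) :=
    fun q => (WithLp.equiv 2 (Fin d₂ → ℝ)).symm (fun j => w (q, j)) with hW
  have hmv : ∀ p i, ((B * D - C) *ᵥ ((WithLp.equiv 2 (Fin k × Fin d₂ → ℝ)) w)) (p, i)
      = ∑ q, (N p q *ᵥ fun j => w (q, j)) i := by
    intro p i
    simp only [Matrix.mulVec, dotProduct, Fintype.sum_prod_type]
    refine Finset.sum_congr rfl fun q _ => ?_
    refine Finset.sum_congr rfl fun j _ => ?_
    rw [hent p q i j]
    rfl
  have hGp : ∀ p, ‖((WithLp.equiv 2 (Fin d₂ → ℝ)).symm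
        (fun i => ((B * D - C) *ᵥ ((WithLp.equiv 2 (Fin k × Fin d₂ → ℝ)) w)) (p, i))
        : EuclideanSpace ℝ (Fin d₂))‖ ≤ (δ * c) * ∑ q, ‖W q‖ := by
    intro p
    have heq : (fun i => ((B * D - C) *ᵥ ((WithLp.equiv 2 (Fin k × Fin d₂ → ℝ)) w)) (p, i))
        = ∑ q, (N p q *ᵥ fun j => w (q, j)) := by
      funext i
      rw [hmv p i]
      simp [Finset.sum_apply]
    rw [heq]
    have hms : ((WithLp.equiv 2 (Fin d₂ → ℝ)).symm (∑ q, (N p q *ᵥ fun j => w (q, j)))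
          : EuclideanSpace ℝ (Fin d₂))
        = ∑ q, ((WithLp.equiv 2 (Fin d₂ → ℝ)).symm (N p q *ᵥ fun j => w (q, j))
          : EuclideanSpace ℝ (Fin d₂)) := by
      have hr : ∀ v : Fin d₂ → ℝ, ((WithLp.equiv 2 (Fin d₂ → ℝ)).symm v : EuclideanSpace ℝ (Fin d₂))
          = (WithLp.linearEquiv 2 ℝ (Fin d₂ → ℝ)).symm v := fun _ => rfl
      simp only [hr]
      exact map_sum (WithLp.linearEquiv 2 ℝ (Fin d₂ → ℝ)).symm _ _
    rw [hms]
    refine (norm_sum_le _ _).trans ?_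
    rw [Finset.mul_sum]
    refine Finset.sum_le_sum fun q _ => ?_
    have hmvb : ‖((WithLp.equiv 2 (Fin d₂ → ℝ)).symm (N p q *ᵥ fun j => w (q, j))
        : EuclideanSpace ℝ (Fin d₂))‖ ≤ ‖N p q‖ * ‖W q‖ := (N p q).l2_opNorm_mulVec (W q)
    refine hmvb.trans ?_
    exact mul_le_mul_of_nonneg_right (hNnorm p q) (norm_nonneg _)
  -- squared norms
  have hWq_sq : ∀ q, ‖W q‖^2 = ∑ j, (w (q, j))^2 := by
    intro q
    rw [EuclideanSpace.norm_eq, Real.sq_sqrt (by positivity)]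
    refine Finset.sum_congr rfl fun j _ => ?_
    rw [Real.norm_eq_abs, sq_abs]
    rfl
  have hw_sq : ‖w‖^2 = ∑ q, ‖W q‖^2 := by
    rw [EuclideanSpace.norm_eq, Real.sq_sqrt (by positivity), Fintype.sum_prod_type]
    refine Finset.sum_congr rfl fun q _ => ?_
    rw [hWq_sq q]
    refine Finset.sum_congr rfl fun j _ => ?_
    rw [Real.norm_eq_abs, sq_abs]
  have hL0 : (0:ℝ) ≤ ‖((WithLp.equiv 2 (Fin k × Fin d₂ → ℝ)).symm
      ((B * D - C) *ᵥ ((WithLp.equiv 2 (Fin k × Fin d₂ → ℝ)) w)) : EuclideanSpace ℝ (Fin k × Fin d₂))‖ :=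
    norm_nonneg _
  refine le_of_pow_le_pow_left₀ two_ne_zero (by positivity) ?_
  have hLsq : ‖((WithLp.equiv 2 (Fin k × Fin d₂ → ℝ)).symm
      ((B * D - C) *ᵥ ((WithLp.equiv 2 (Fin k × Fin d₂ → ℝ)) w)) : EuclideanSpace ℝ (Fin k × Fin d₂))‖^2
      = ∑ p, ‖((WithLp.equiv 2 (Fin d₂ → ℝ)).symm
        (fun i => ((B * D - C) *ᵥ ((WithLp.equiv 2 (Fin k × Fin d₂ → ℝ)) w)) (p, i))
        : EuclideanSpace ℝ (Fin d₂))‖^2 := by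
    rw [EuclideanSpace.norm_eq, Real.sq_sqrt (by positivity), Fintype.sum_prod_type]
    refine Finset.sum_congr rfl fun p _ => ?_
    rw [EuclideanSpace.norm_eq, Real.sq_sqrt (by positivity)]
    exact Finset.sum_congr rfl fun i _ => rfl
  rw [hLsq]
  have hCS : (∑ q, ‖W q‖)^2 ≤ (k:ℝ) * ∑ q, ‖W q‖^2 := by
    simpa using sq_sum_le_card_mul_sum_sq (s := (Finset.univ : Finset (Fin k)))
      (f := fun q => ‖W q‖)
  calc ∑ p, ‖((WithLp.equiv 2 (Fin d₂ → ℝ)).symm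
        (fun i => ((B * D - C) *ᵥ ((WithLp.equiv 2 (Fin k × Fin d₂ → ℝ)) w)) (p, i))
        : EuclideanSpace ℝ (Fin d₂))‖^2
      ≤ ∑ _p : Fin k, ((δ * c) * ∑ q, ‖W q‖)^2 := by
        refine Finset.sum_le_sum fun p _ => ?_
        exact pow_le_pow_left₀ (norm_nonneg _) (hGp p) 2
    _ = (k:ℝ) * ((δ * c) * ∑ q, ‖W q‖)^2 := by
        rw [Finset.sum_const, Finset.card_univ, Fintype.card_fin, nsmul_eq_mul]
    _ = (k:ℝ) * ((δ * c)^2 * (∑ q, ‖W q‖)^2) := by ring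
    _ ≤ (k:ℝ) * ((δ * c)^2 * ((k:ℝ) * ∑ q, ‖W q‖^2)) := by
        refine mul_le_mul_of_nonneg_left (mul_le_mul_of_nonneg_left hCS (by positivity))
          (by positivity)
    _ = ((k:ℝ) * δ * c * ‖w‖)^2 := by rw [← hw_sq]; ring
end

section
/- Let x₁,…,x_m ∈ ℝ^{d₁}, y₁,…,y_m ∈ ℝ^{d₂}. Let W* ∈ ℝ^{d₁×d₂} have reduced singular value decomposition W* = U* Σ* V*ᵀ with U* ∈ ℝ^{d₁×k}, V* ∈ ℝ^{d₂×k} having orthonormal columns and Σ* = diag(σ₁,…,σ_k), σ₁ ≥ … ≥ σ_k > 0; set β = σ₁/σ_k and δ = 1/(100 k^{3/2} β). Let U ∈ ℝ^{d₁×k} have orthonormal columns u₁,…,u_k. Define block matrices B, C, D, S ∈ ℝ^{kd₂×kd₂} with (p,q)-th d₂×d₂ blocks B_{pq} = (1/m) Σᵢ (xᵢᵀu_p)(xᵢᵀu_q) yᵢyᵢᵀ, C_{pq} = (1/m) Σᵢ (xᵢᵀu_p)(xᵢᵀu_{*q}) yᵢyᵢᵀ, D_{pq} = (u_pᵀu_{*q})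 I_{d₂}, and S_{pq} = σ_p I_{d₂} if p = q and 0 otherwise. Assume: (i) for every unit vector w ∈ ℝ^{d₁}, ‖(1/m) Σᵢ (xᵢᵀw)² yᵢyᵢᵀ − I‖₂ ≤ δ; and (ii) for every pair of unit vectors w, w⊥ ∈ ℝ^{d₁} with wᵀw⊥ = 0, ‖(1/m) Σᵢ (xᵢᵀw)(xᵢᵀw⊥) yᵢyᵢᵀ‖₂ ≤ δ. Then B is invertible, and the matrix F ∈ ℝ^{d₂×k} whose stacked columns satisfy [F₁; … ; F_k] = B⁻¹(BD − C) S · vec(V*) obeys ‖F‖₂ ≤ ‖F‖_F ≤ (σ_k/90) · dist(U, U*). -/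
open Matrix
open scoped Matrix.Norms.L2Operator

noncomputable def en {n : Type*} [Fintype n] (v : n → ℝ) : ℝ := Real.sqrt (∑ i, v i ^ 2)

lemma en_nonneg {n : Type*} [Fintype n] (v : n → ℝ) : 0 ≤ en v := Real.sqrt_nonneg _

lemma en_sq {n : Type*} [Fintype n] (v : n → ℝ) : en v ^ 2 = ∑ i, v i ^ 2 :=
  Real.sq_sqrt (Finset.sum_nonneg fun _ _ => sq_nonneg _)

lemma en_eq_norm {n : Type*} [Fintype n] (v : n → ℝ) :
    en v = ‖(WithLp.equiv 2 (n → ℝ)).symm v‖ := by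
  rw [EuclideanSpace.norm_eq]
  simp [en, Real.norm_eq_abs, sq_abs]

lemma en_mulVec_le {m n : Type*} [Fintype m] [Fintype n] [DecidableEq m] [DecidableEq n]
    (A : Matrix m n ℝ) (v : n → ℝ) :
    en (A *ᵥ v) ≤ ‖A‖ * en v := by
  rw [en_eq_norm, en_eq_norm]
  simpa using A.l2_opNorm_mulVec ((WithLp.equiv 2 (n → ℝ)).symm v)

lemma opNorm_le_of_en {m n : Type*} [Fintype m] [Fintype n] [DecidableEq m] [DecidableEq n]
    (A : Matrix m n ℝ) {c : ℝ}
    (hc : 0 ≤ c) (h : ∀ v : n → ℝ, en (A *ᵥ v) ≤ c * en v) : ‖A‖ ≤ c := by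
  rw [Matrix.l2_opNorm_def]
  refine ContinuousLinearMap.opNorm_le_bound _ hc fun x => ?_
  have := h (WithLp.equiv 2 (n → ℝ) x)
  rw [en_eq_norm, en_eq_norm] at this
  simpa [Matrix.toEuclideanLin_apply] using this

lemma abs_dot_le {n : Type*} [Fintype n] (v w : n → ℝ) : |v ⬝ᵥ w| ≤ en v * en w := by
  have h := Finset.sum_mul_sq_le_sq_mul_sq Finset.univ v w
  have : |v ⬝ᵥ w| = Real.sqrt ((v ⬝ᵥ w) ^ 2) := (Real.sqrt_sq_eq_abs _).symm
  rw [this, dotProduct, en, en, ← Real.sqrt_mul (Finset.sum_nonneg fun _ _ => sq_nonneg _)]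
  exact Real.sqrt_le_sqrt h

lemma en_sum_le {ι n : Type*} [Fintype n] (s : Finset ι) (f : ι → n → ℝ) :
    en (∑ q ∈ s, f q) ≤ ∑ q ∈ s, en (f q) := by
  simp only [en_eq_norm]
  rw [show (WithLp.equiv 2 (n → ℝ)).symm (∑ q ∈ s, f q)
      = ∑ q ∈ s, (WithLp.equiv 2 (n → ℝ)).symm (f q) from
    map_sum (WithLp.linearEquiv 2 ℝ (n → ℝ)).symm f s]
  exact norm_sum_le _ _

lemma en_smul {n : Type*} [Fintype n] (c : ℝ) (v : n → ℝ) : en (c • v) = |c| * en v := by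
  simp only [en_eq_norm]
  rw [show (WithLp.equiv 2 (n → ℝ)).symm (c • v)
      = c • (WithLp.equiv 2 (n → ℝ)).symm v from rfl, norm_smul, Real.norm_eq_abs]

lemma en_neg {n : Type*} [Fintype n] (v : n → ℝ) : en (-v) = en v := by
  simp [en]

lemma en_pos_of_ne {n : Type*} [Fintype n] {v : n → ℝ} (h : v ≠ 0) : 0 < en v := by
  rw [en, Real.sqrt_pos]
  obtain ⟨i, hi⟩ := Function.ne_iff.1 h
  exact Finset.sum_pos' (fun j _ => sq_nonneg _) ⟨i, Finset.mem_univ i, by have h2 := abs_pos.2 hi; nlinarith [sq_abs (v i)]⟩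

set_option maxHeartbeats 4000000 in
/-- Bound on the error matrix `F` in the rank-k alternating-minimization
update, where `dist(U, U*) = ‖(I − UUᵀ)U*‖₂` and `‖F‖_F` is the Frobenius norm. -/
theorem error_matrix_F_bound
    (d₁ d₂ k m : ℕ) (hk : 0 < k)
    (x : Fin m → Fin d₁ → ℝ) (y : Fin m → Fin d₂ → ℝ)
    (Wstar : Matrix (Fin d₁) (Fin d₂) ℝ)
    (Ustar : Matrix (Fin d₁) (Fin k) ℝ) (Vstar : Matrix (Fin d₂) (Fin k) ℝ)
    (σ : Fin k → ℝ)
    (hUstar : Ustarᵀ * Ustar = 1) (hVstar : Vstarᵀ * Vstar = 1)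
    (hσdec : Antitone σ) (hσpos : ∀ p, 0 < σ p)
    (hWstar : Wstar = Ustar * Matrix.diagonal σ * Vstarᵀ)
    (β δ : ℝ)
    (hβ : β = σ ⟨0, hk⟩ / σ ⟨k - 1, by omega⟩)
    (hδ : δ = 1 / (100 * (k : ℝ) ^ ((3 : ℝ) / 2) * β))
    (U : Matrix (Fin d₁) (Fin k) ℝ) (hU : Uᵀ * U = 1)
    (B C D S : Matrix (Fin k × Fin d₂) (Fin k × Fin d₂) ℝ)
    (hB : B = Matrix.of fun pi qj =>
      (m : ℝ)⁻¹ * ∑ t, ((x t ⬝ᵥ fun a => U a pi.1) * (x t ⬝ᵥ fun a => U a qj.1))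
        * (y t pi.2 * y t qj.2))
    (hC : C = Matrix.of fun pi qj =>
      (m : ℝ)⁻¹ * ∑ t, ((x t ⬝ᵥ fun a => U a pi.1) * (x t ⬝ᵥ fun a => Ustar a qj.1))
        * (y t pi.2 * y t qj.2))
    (hD : D = Matrix.of fun pi qj =>
      ((fun a => U a pi.1) ⬝ᵥ fun a => Ustar a qj.1) * (if pi.2 = qj.2 then 1 else 0))
    (hS : S = Matrix.of fun pi qj => if pi = qj then σ pi.1 else 0)
    (hconc1 : ∀ w : Fin d₁ → ℝ, w ⬝ᵥ w = 1 →
      ‖(m : ℝ)⁻¹ • ∑ t, ((x t ⬝ᵥ w) ^ 2) • vecMulVec (y t) (y t) - 1‖ ≤ δ)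
    (hconc2 : ∀ w wperp : Fin d₁ → ℝ, w ⬝ᵥ w = 1 → wperp ⬝ᵥ wperp = 1 → w ⬝ᵥ wperp = 0 →
      ‖(m : ℝ)⁻¹ • ∑ t, ((x t ⬝ᵥ w) * (x t ⬝ᵥ wperp)) • vecMulVec (y t) (y t)‖ ≤ δ) :
    IsUnit B.det ∧
    ∀ F : Matrix (Fin d₂) (Fin k) ℝ,
      (∀ i q, F i q = ((B⁻¹ * (B * D - C) * S).mulVec fun qj => Vstar qj.2 qj.1) (q, i)) →
      ‖F‖ ≤ Real.sqrt (∑ i, ∑ q, F i q ^ 2) ∧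
      Real.sqrt (∑ i, ∑ q, F i q ^ 2) ≤
        σ ⟨k - 1, by omega⟩ / 90 * ‖(1 - U * Uᵀ) * Ustar‖ := by
  classical
  set u : Fin k → Fin d₁ → ℝ := fun p a => U a p with hu_def
  set us : Fin k → Fin d₁ → ℝ := fun q a => Ustar a q with hus_def
  set vs : Fin k → Fin d₂ → ℝ := fun q j => Vstar j q with hvs_def
  set w : Fin k → Fin d₁ → ℝ := fun q a => ((1 - U * Uᵀ) * Ustar : Matrix (Fin d₁) (Fin k) ℝ) a q with hw_def
  set ρ : ℝ := ‖(1 - U * Uᵀ) * Ustar‖ with hρ_def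
  set sk : ℝ := σ ⟨k - 1, by omega⟩ with hsk_def
  set s0 : ℝ := σ ⟨0, hk⟩ with hs0_def
  have hρ0 : 0 ≤ ρ := norm_nonneg _
  have hskpos : 0 < sk := hσpos _
  have hs0pos : 0 < s0 := hσpos _
  have hsks0 : sk ≤ s0 := hσdec (by simp [Fin.mk_le_mk])
  have hβ1 : (1:ℝ) ≤ β := by
    rw [hβ]; rw [le_div_iff₀ hskpos]; simpa using hsks0
  have hr1 : (1:ℝ) ≤ (k:ℝ) := by exact_mod_cast hk
  have hsr1 : (1:ℝ) ≤ Real.sqrt k := by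
    rw [show (1:ℝ) = Real.sqrt 1 from (Real.sqrt_one).symm]
    exact Real.sqrt_le_sqrt hr1
  have hrpow : (k:ℝ) ^ ((3:ℝ)/2) = (k:ℝ) * Real.sqrt k := by
    have hk0 : (0:ℝ) < (k:ℝ) := by linarith
    rw [show (3:ℝ)/2 = 1 + 1/2 by norm_num, Real.rpow_add hk0, Real.rpow_one,
      ← Real.sqrt_eq_rpow]
  have hδval : δ * ((k:ℝ) * Real.sqrt k) * β = 1 / 100 := by
    rw [hδ, hrpow]
    have : (100:ℝ) * ((k:ℝ) * Real.sqrt k) * β ≠ 0 := by positivity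
    field_simp
  have hδpos : 0 < δ := by
    rw [hδ, hrpow]; positivity
  have hkδ : (k:ℝ) * δ ≤ 1/100 := by
    have h1 : (k:ℝ) * δ * (Real.sqrt k * β) = 1/100 := by
      rw [← hδval]; ring
    have hc1 : (1:ℝ) ≤ Real.sqrt k * β := by nlinarith
    have hp : 0 < (k:ℝ) * δ := mul_pos (by linarith) hδpos
    nlinarith [mul_nonneg hp.le (sub_nonneg.2 hc1)]
  have hkey : (k:ℝ) * Real.sqrt k * δ * s0 = sk / 100 := by
    have hβ' : β = s0 / sk := hβ
    have h1 : δ * ((k:ℝ) * Real.sqrt k) * (s0 / sk) = 1/100 := by rw [← hβ']; exact hδval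
    have hskne : sk ≠ 0 := ne_of_gt hskpos
    have h2 : δ * ((k:ℝ) * Real.sqrt k) * s0 = (δ * ((k:ℝ) * Real.sqrt k) * (s0 / sk)) * sk := by
      field_simp
    rw [h1] at h2
    linear_combination h2
  -- orthonormality facts
  have h_uu : ∀ p q, u p ⬝ᵥ u q = if p = q then 1 else 0 := by
    intro p q
    have := congrFun (congrFun hU p) q
    simpa [Matrix.mul_apply, Matrix.one_apply, dotProduct, Matrix.transpose_apply] using this
  have h_vv : ∀ q, ∑ j, Vstar j q ^ 2 = 1 := by
    intro q
    have := congrFun (congrFun hVstar q) q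
    simpa [Matrix.mul_apply, Matrix.one_apply, Matrix.transpose_apply, sq] using this
  have h_en_vs : ∀ q, en (vs q) = 1 := by
    intro q; rw [en]
    simpa using congrArg Real.sqrt (h_vv q) |>.trans Real.sqrt_one
  have h_uw : ∀ p q, u p ⬝ᵥ w q = 0 := by
    intro p q
    have key : Uᵀ * ((1 - U * Uᵀ) * Ustar) = 0 := by
      have : Uᵀ * ((1 - U * Uᵀ) * Ustar) = Uᵀ * Ustar - (Uᵀ * U) * (Uᵀ * Ustar) := by
        simp only [Matrix.sub_mul, Matrix.mul_sub, Matrix.one_mul, Matrix.mul_assoc]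
      rw [this, hU, one_mul, sub_self]
    have := congrFun (congrFun key p) q
    show ∑ i, U i p * ((1 - U * Uᵀ) * Ustar : Matrix (Fin d₁) (Fin k) ℝ) i q = 0
    simpa [Matrix.mul_apply, dotProduct, Matrix.transpose_apply] using this
  -- the error matrices
  set Err : Fin k → Fin k → Matrix (Fin d₂) (Fin d₂) ℝ := fun p q =>
    ((m:ℝ)⁻¹ • ∑ t, ((x t ⬝ᵥ u p) * (x t ⬝ᵥ u q)) • vecMulVec (y t) (y t))
      - (if p = q then 1 else 0) with hErr_def
  have hErr_norm : ∀ p q, ‖Err p q‖ ≤ δ := by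
    intro p q
    by_cases hpq : p = q
    · subst hpq
      simp only [hErr_def, if_pos rfl]
      have h1 : u p ⬝ᵥ u p = 1 := by rw [h_uu]; simp
      simpa [sq] using hconc1 (u p) h1
    · simp only [hErr_def, if_neg hpq, sub_zero]
      have h1 : u p ⬝ᵥ u p = 1 := by rw [h_uu]; simp
      have h2 : u q ⬝ᵥ u q = 1 := by rw [h_uu]; simp
      have h3 : u p ⬝ᵥ u q = 0 := by rw [h_uu]; simp [hpq]
      exact hconc2 (u p) (u q) h1 h2 h3
  have hB_err : ∀ (p : Fin k) (i : Fin d₂) (q : Fin k) (j : Fin d₂),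
      (B - 1) (p, i) (q, j) = Err p q i j := by
    intro p i q j
    rcases eq_or_ne p q with hpq | hpq
    · subst hpq
      simp only [hB, hErr_def, hu_def, Matrix.sub_apply, Matrix.of_apply, Matrix.smul_apply,
        Matrix.sum_apply, Matrix.one_apply, smul_eq_mul, vecMulVec_apply, Prod.mk.injEq,
        if_pos rfl, true_and, if_true]
    · simp only [hB, hErr_def, hu_def, Matrix.sub_apply, Matrix.of_apply, Matrix.smul_apply,
        Matrix.sum_apply, Matrix.one_apply, smul_eq_mul, vecMulVec_apply, Prod.mk.injEq,
        if_neg hpq, hpq, Matrix.zero_apply, sub_zero, false_and, if_false]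
    
  -- quadratic form lower bound
  have hquad : ∀ z : Fin k × Fin d₂ → ℝ, (1 - (k:ℝ) * δ) * (z ⬝ᵥ z) ≤ z ⬝ᵥ (B *ᵥ z) := by
    intro z
    set zb : Fin k → Fin d₂ → ℝ := fun p i => z (p, i) with hzb_def
    have hzz : z ⬝ᵥ z = ∑ p, ∑ i, zb p i ^ 2 := by
      simp [dotProduct, Fintype.sum_prod_type, sq, hzb_def]
    have hsplit : z ⬝ᵥ (B *ᵥ z) = z ⬝ᵥ z + ∑ p, ∑ q, (zb p) ⬝ᵥ (Err p q *ᵥ zb q) := by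
      have h1 : z ⬝ᵥ ((B - 1) *ᵥ z) = ∑ p, ∑ q, (zb p) ⬝ᵥ (Err p q *ᵥ zb q) := by
        calc z ⬝ᵥ ((B - 1) *ᵥ z)
            = ∑ p, ∑ i, zb p i * ∑ q, ∑ j, Err p q i j * zb q j := by
              simp only [dotProduct, Matrix.mulVec, Fintype.sum_prod_type, hB_err, hzb_def]
          _ = ∑ p, ∑ q, (zb p) ⬝ᵥ (Err p q *ᵥ zb q) := by
              refine Finset.sum_congr rfl fun p _ => ?_
              simp_rw [Finset.mul_sum]
              rw [Finset.sum_comm]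
              refine Finset.sum_congr rfl fun q _ => ?_
              simp [dotProduct, Matrix.mulVec, Finset.mul_sum]
      have h2 : (B - 1) *ᵥ z = B *ᵥ z - z := by
        rw [Matrix.sub_mulVec, Matrix.one_mulVec]
      rw [h2, dotProduct_sub] at h1
      linarith [h1]
    have hterm : ∀ p q, -(δ * (en (zb p) * en (zb q))) ≤ zb p ⬝ᵥ (Err p q *ᵥ zb q) := by
      intro p q
      have h1 : |zb p ⬝ᵥ (Err p q *ᵥ zb q)| ≤ en (zb p) * (δ * en (zb q)) := by
        refine (abs_dot_le _ _).trans ?_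
        refine mul_le_mul_of_nonneg_left ?_ (en_nonneg _)
        exact (en_mulVec_le (Err p q) (zb q)).trans
          (mul_le_mul_of_nonneg_right (hErr_norm p q) (en_nonneg _))
      have h2 := neg_abs_le (zb p ⬝ᵥ (Err p q *ᵥ zb q))
      nlinarith [h1, h2]
    have hsum1 : -(δ * (∑ p, en (zb p)) ^ 2) ≤ ∑ p, ∑ q, zb p ⬝ᵥ (Err p q *ᵥ zb q) := by
      have hle : ∑ p, ∑ q, -(δ * (en (zb p) * en (zb q))) ≤
          ∑ p, ∑ q, zb p ⬝ᵥ (Err p q *ᵥ zb q) :=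
        Finset.sum_le_sum fun p _ => Finset.sum_le_sum fun q _ => hterm p q
      refine le_trans (le_of_eq ?_) hle
      rw [sq, Finset.sum_mul_sum, Finset.mul_sum, ← Finset.sum_neg_distrib]
      refine Finset.sum_congr rfl fun p _ => ?_
      rw [Finset.mul_sum, ← Finset.sum_neg_distrib]
    have hcs : (∑ p, en (zb p)) ^ 2 ≤ (k:ℝ) * ∑ p, en (zb p) ^ 2 := by
      have := sq_sum_le_card_mul_sum_sq (s := (Finset.univ : Finset (Fin k)))
        (f := fun p => en (zb p))
      simpa using this
    have hzz2 : ∑ p, en (zb p) ^ 2 = z ⬝ᵥ z := by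
      rw [hzz]
      exact Finset.sum_congr rfl fun p _ => en_sq _
    have hzznn : 0 ≤ z ⬝ᵥ z := by
      rw [hzz]
      exact Finset.sum_nonneg fun p _ => Finset.sum_nonneg fun i _ => sq_nonneg _
    rw [hsplit]
    nlinarith [hsum1, hcs, hzz2, hδpos.le, mul_le_mul_of_nonneg_left hcs hδpos.le]
  have hdet : IsUnit B.det := by
    rw [isUnit_iff_ne_zero]
    intro h0
    obtain ⟨v, hv0, hv⟩ := (Matrix.exists_mulVec_eq_zero_iff).2 h0
    have h1 := hquad v
    rw [hv] at h1
    simp only [dotProduct_zero] at h1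
    have h2 : 0 < v ⬝ᵥ v := by
      rw [dotProduct]
      obtain ⟨i, hi⟩ := Function.ne_iff.1 hv0
      exact Finset.sum_pos' (fun j _ => mul_self_nonneg _)
        ⟨i, Finset.mem_univ i, mul_self_pos.2 hi⟩
    nlinarith
  -- the w-error matrices
  set Mw : Fin k → Fin k → Matrix (Fin d₂) (Fin d₂) ℝ := fun p q =>
    (m:ℝ)⁻¹ • ∑ t, ((x t ⬝ᵥ u p) * (x t ⬝ᵥ w q)) • vecMulVec (y t) (y t) with hMw_def
  have hw_entry : ∀ (a : Fin d₁) (q : Fin k), w q a = Ustar a q - ∑ r, U a r * (u r ⬝ᵥ us q) := by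
    intro a q
    have hww : ((1 - U * Uᵀ) * Ustar : Matrix (Fin d₁) (Fin k) ℝ) = Ustar - U * (Uᵀ * Ustar) := by
      simp only [Matrix.sub_mul, Matrix.mul_sub, Matrix.one_mul, Matrix.mul_assoc]
    show ((1 - U * Uᵀ) * Ustar : Matrix (Fin d₁) (Fin k) ℝ) a q = _
    rw [hww, Matrix.sub_apply]
    simp [Matrix.mul_apply, dotProduct, hu_def, hus_def, Matrix.transpose_apply]
  have hxw : ∀ (t : Fin m) (q : Fin k),
      x t ⬝ᵥ w q = x t ⬝ᵥ us q - ∑ r, (x t ⬝ᵥ u r) * (u r ⬝ᵥ us q) := by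
    intro t q
    simp only [dotProduct, hw_entry, mul_sub, Finset.sum_sub_distrib, Finset.mul_sum,
      Finset.sum_mul, hus_def, hu_def]
    congr 1
    rw [Finset.sum_comm]
    refine Finset.sum_congr rfl fun r _ => ?_
    rw [Finset.sum_comm]
    refine Finset.sum_congr rfl fun a _ => Finset.sum_congr rfl fun b _ => ?_
    ring
  have hMw_norm : ∀ p q, ‖Mw p q‖ ≤ δ * en (w q) := by
    intro p q
    by_cases hwq : w q = 0
    · have : Mw p q = 0 := by
        simp [hMw_def, hwq]
      rw [this, norm_zero, hwq]
      have : en (0 : Fin d₁ → ℝ) = 0 := by simp [en]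
      rw [this, mul_zero]
    · have hc : 0 < en (w q) := en_pos_of_ne hwq
      set c := en (w q) with hc_def
      set wn : Fin d₁ → ℝ := c⁻¹ • w q with hwn_def
      have hwcn : w q = c • wn := by
        rw [hwn_def, smul_smul, mul_inv_cancel₀ (ne_of_gt hc), one_smul]
      have hwnn : wn ⬝ᵥ wn = 1 := by
        rw [hwn_def, smul_dotProduct, dotProduct_smul]
        have hww : w q ⬝ᵥ w q = c ^ 2 := by
          rw [hc_def, en_sq]
          simp [dotProduct, sq]
        rw [hww, smul_eq_mul, smul_eq_mul]
        field_simp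
      have hupwn : u p ⬝ᵥ wn = 0 := by
        rw [hwn_def, dotProduct_smul, h_uw, smul_zero]
      have hN := hconc2 (u p) wn (by rw [h_uu]; simp) hwnn hupwn
      have hxwn : ∀ t, x t ⬝ᵥ w q = c * (x t ⬝ᵥ wn) := by
        intro t
        rw [hwcn, dotProduct_smul, smul_eq_mul]
      have hMc : Mw p q = c • ((m:ℝ)⁻¹ • ∑ t, ((x t ⬝ᵥ u p) * (x t ⬝ᵥ wn)) • vecMulVec (y t) (y t)) := by
        ext i j
        simp only [hMw_def, Matrix.smul_apply, Matrix.sum_apply, vecMulVec_apply,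
          smul_eq_mul, hxwn, Finset.mul_sum]
        refine Finset.sum_congr rfl fun t _ => ?_
        ring
      rw [hMc, norm_smul, Real.norm_eq_abs, abs_of_pos hc]
      calc c * ‖_‖ ≤ c * δ := by exact mul_le_mul_of_nonneg_left hN hc.le
        _ = δ * c := by ring
  have hw_en : ∀ q, en (w q) ≤ ρ := by
    intro q
    have hcol : w q = ((1 - U * Uᵀ) * Ustar) *ᵥ Pi.single q 1 := by
      funext a
      simp [Matrix.mulVec_single, hw_def]
    have hs1 : en (Pi.single q (1:ℝ) : Fin k → ℝ) = 1 := by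
      rw [en]
      rw [show ∑ r, (Pi.single q (1:ℝ) : Fin k → ℝ) r ^ 2 = 1 by
        simp [Pi.single_apply, sq]]
      exact Real.sqrt_one
    calc en (w q) = en (((1 - U * Uᵀ) * Ustar) *ᵥ Pi.single q 1) := by rw [← hcol]
      _ ≤ ρ * en (Pi.single q (1:ℝ) : Fin k → ℝ) := en_mulVec_le _ _
      _ = ρ := by rw [hs1, mul_one]
  refine ⟨hdet, ?_⟩
  intro F hF
  set vvec : Fin k × Fin d₂ → ℝ := fun qj => Vstar qj.2 qj.1 with hvvec_def
  set g : Fin k × Fin d₂ → ℝ := ((B * D - C) * S) *ᵥ vvec with hg_def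
  set f : Fin k × Fin d₂ → ℝ := (B⁻¹ * (B * D - C) * S) *ᵥ vvec with hf_def
  have hBf : B *ᵥ f = g := by
    rw [hf_def, hg_def, Matrix.mulVec_mulVec, ← Matrix.mul_assoc B _ S,
      Matrix.mul_nonsing_inv_cancel_left _ _ hdet]
  have hBD : ∀ (p : Fin k) (i : Fin d₂) (q : Fin k) (j : Fin d₂),
      (B * D - C) (p, i) (q, j) = -(Mw p q i j) := by
    intro p i q j
    have hBDa : (B * D) (p, i) (q, j)
        = ∑ r, B (p, i) (r, j) * (u r ⬝ᵥ us q) := by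
      rw [Matrix.mul_apply, Fintype.sum_prod_type]
      refine Finset.sum_congr rfl fun r _ => ?_
      simp only [show ∀ l, D (r, l) (q, j) = (u r ⬝ᵥ us q) * (if l = j then 1 else 0) from
        fun l => by simp [hD, hu_def, hus_def]]
      simp [mul_ite, mul_zero, mul_one, Finset.sum_ite_eq']
    rw [Matrix.sub_apply, hBDa]
    have hBentry : ∀ r : Fin k, B (p, i) (r, j)
        = (m:ℝ)⁻¹ * ∑ t, ((x t ⬝ᵥ u p) * (x t ⬝ᵥ u r)) * (y t i * y t j) := by
      intro r
      simp [hB, hu_def]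
    have hCentry : C (p, i) (q, j)
        = (m:ℝ)⁻¹ * ∑ t, ((x t ⬝ᵥ u p) * (x t ⬝ᵥ us q)) * (y t i * y t j) := by
      simp [hC, hu_def, hus_def]
    have hMentry : Mw p q i j
        = (m:ℝ)⁻¹ * ∑ t, ((x t ⬝ᵥ u p) * (x t ⬝ᵥ w q)) * (y t i * y t j) := by
      simp [hMw_def, Matrix.smul_apply, Matrix.sum_apply, vecMulVec_apply, mul_assoc]
    rw [hCentry, hMentry]
    simp_rw [hBentry]
    rw [show ∑ r, ((m:ℝ)⁻¹ * ∑ t, ((x t ⬝ᵥ u p) * (x t ⬝ᵥ u r)) * (y t i * y t j)) * (u r ⬝ᵥ us q)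
        = (m:ℝ)⁻¹ * ∑ t, ((x t ⬝ᵥ u p) * (∑ r, (x t ⬝ᵥ u r) * (u r ⬝ᵥ us q))) * (y t i * y t j) by
      simp only [Finset.mul_sum, Finset.sum_mul]
      rw [Finset.sum_comm]
      refine Finset.sum_congr rfl fun t _ => Finset.sum_congr rfl fun r _ => ?_
      ring]
    rw [← mul_sub, ← Finset.sum_sub_distrib]
    rw [← mul_neg, ← Finset.sum_neg_distrib]
    congr 1
    refine Finset.sum_congr rfl fun t _ => ?_
    rw [hxw t q]
    ring
  have hSv : ∀ qj : Fin k × Fin d₂, (S *ᵥ vvec) qj = σ qj.1 * vvec qj := by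
    intro qj
    rw [Matrix.mulVec, dotProduct]
    simp [hS, ite_mul, zero_mul, Finset.sum_ite_eq]
  have hg_blocks : ∀ p : Fin k, (fun i => g (p, i)) = -∑ q, σ q • (Mw p q *ᵥ vs q) := by
    intro p
    funext i
    have : g (p, i) = ∑ qj : Fin k × Fin d₂, (B * D - C) (p, i) qj * (S *ᵥ vvec) qj := by
      rw [hg_def, ← Matrix.mulVec_mulVec]
      rfl
    rw [this]
    rw [Fintype.sum_prod_type]
    simp only [Pi.neg_apply, Finset.sum_apply, Pi.smul_apply, smul_eq_mul]
    rw [← Finset.sum_neg_distrib]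
    refine Finset.sum_congr rfl fun q _ => ?_
    simp only [hSv, hBD]
    simp only [hvvec_def]
    rw [Matrix.mulVec, dotProduct, Finset.mul_sum, ← Finset.sum_neg_distrib]
    refine Finset.sum_congr rfl fun j _ => ?_
    simp only [hvs_def]
    ring
  have hgp_bound : ∀ p, en (fun i => g (p, i)) ≤ (k:ℝ) * (s0 * (δ * ρ)) := by
    intro p
    rw [hg_blocks p]
    have hterm : ∀ q, en (σ q • (Mw p q *ᵥ vs q)) ≤ s0 * (δ * ρ) := by
      intro q
      rw [en_smul, abs_of_pos (hσpos q)]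
      have h1 : en (Mw p q *ᵥ vs q) ≤ δ * ρ := by
        refine (en_mulVec_le _ _).trans ?_
        rw [h_en_vs q, mul_one]
        refine (hMw_norm p q).trans ?_
        exact mul_le_mul_of_nonneg_left (hw_en q) hδpos.le
      have hσq : σ q ≤ s0 := hσdec (by simp [Fin.le_def])
      exact mul_le_mul hσq h1 (en_nonneg _) hs0pos.le
    calc en (-∑ q, σ q • (Mw p q *ᵥ vs q))
        = en (∑ q, σ q • (Mw p q *ᵥ vs q)) := en_neg _
      _ ≤ ∑ q : Fin k, en (σ q • (Mw p q *ᵥ vs q)) := en_sum_le _ _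
      _ ≤ ∑ _q : Fin k, s0 * (δ * ρ) := Finset.sum_le_sum fun q _ => hterm q
      _ = (k:ℝ) * (s0 * (δ * ρ)) := by
          rw [Finset.sum_const, Finset.card_univ, Fintype.card_fin, nsmul_eq_mul]
  have hgen : en g ≤ sk / 100 * ρ := by
    have h1 : en g ^ 2 ≤ (k:ℝ) * ((k:ℝ) * (s0 * (δ * ρ))) ^ 2 := by
      rw [en_sq, Fintype.sum_prod_type]
      calc ∑ p, ∑ i, g (p, i) ^ 2
          = ∑ p, en (fun i => g (p, i)) ^ 2 :=
            Finset.sum_congr rfl fun p _ => (en_sq _).symm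
        _ ≤ ∑ _p : Fin k, ((k:ℝ) * (s0 * (δ * ρ))) ^ 2 :=
            Finset.sum_le_sum fun p _ => pow_le_pow_left₀ (en_nonneg _) (hgp_bound p) 2
        _ = (k:ℝ) * ((k:ℝ) * (s0 * (δ * ρ))) ^ 2 := by
            rw [Finset.sum_const, Finset.card_univ, Fintype.card_fin, nsmul_eq_mul]
    have h2 : en g ≤ Real.sqrt ((k:ℝ) * ((k:ℝ) * (s0 * (δ * ρ))) ^ 2) := by
      rw [← Real.sqrt_sq (en_nonneg g)]
      exact Real.sqrt_le_sqrt h1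
    rw [Real.sqrt_mul (by positivity) _, Real.sqrt_sq (by positivity)] at h2
    calc en g ≤ Real.sqrt k * ((k:ℝ) * (s0 * (δ * ρ))) := h2
      _ = ((k:ℝ) * Real.sqrt k * δ * s0) * ρ := by ring
      _ = sk / 100 * ρ := by rw [hkey]
  have hff : f ⬝ᵥ f = en f ^ 2 := by
    rw [en_sq]
    simp [dotProduct, sq]
  have h3 : (1 - (k:ℝ) * δ) * en f ^ 2 ≤ en f * en g := by
    have hq := hquad f
    rw [hBf, hff] at hq
    refine hq.trans ?_
    exact (le_abs_self _).trans (abs_dot_le f g)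
  have hfro : Real.sqrt (∑ i, ∑ q, F i q ^ 2) = en f := by
    rw [show ∑ i, ∑ q, F i q ^ 2 = ∑ pq : Fin k × Fin d₂, f pq ^ 2 by
      rw [Fintype.sum_prod_type, Finset.sum_comm]
      refine Finset.sum_congr rfl fun q _ => Finset.sum_congr rfl fun i _ => ?_
      rw [hF i q]]
    rfl
  have hfinal : en f ≤ sk / 90 * ρ := by
    have hskρ : 0 ≤ sk * ρ := mul_nonneg hskpos.le hρ0
    have h4 : en f * en g ≤ en f * (sk / 100 * ρ) :=
      mul_le_mul_of_nonneg_left hgen (en_nonneg f)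
    nlinarith [h3, h4, en_nonneg f, sq_nonneg (en f), hkδ, hskρ]
  constructor
  · rw [hfro]
    refine opNorm_le_of_en F (en_nonneg f) fun v => ?_
    have h1 : en (F *ᵥ v) ^ 2 ≤ (en f * en v) ^ 2 := by
      rw [en_sq, mul_pow, en_sq, en_sq]
      calc ∑ i, (F *ᵥ v) i ^ 2
          ≤ ∑ i, ((∑ q, F i q ^ 2) * ∑ q, v q ^ 2) := by
            refine Finset.sum_le_sum fun i _ => ?_
            rw [Matrix.mulVec, dotProduct]
            exact Finset.sum_mul_sq_le_sq_mul_sq Finset.univ _ _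
        _ = (∑ i, ∑ q, F i q ^ 2) * ∑ q, v q ^ 2 := by rw [← Finset.sum_mul]
        _ = (∑ pq : Fin k × Fin d₂, f pq ^ 2) * ∑ q, v q ^ 2 := by
            rw [show ∑ i, ∑ q, F i q ^ 2 = ∑ pq : Fin k × Fin d₂, f pq ^ 2 by
              rw [Fintype.sum_prod_type, Finset.sum_comm]
              refine Finset.sum_congr rfl fun q _ => Finset.sum_congr rfl fun i _ => ?_
              rw [hF i q]]
    have h2 := Real.sqrt_le_sqrt h1
    rwa [Real.sqrt_sq (en_nonneg _), Real.sqrt_sq (mul_nonneg (en_nonneg f) (en_nonneg v))] at h2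
  · rw [hfro]
    exact hfinal
end
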